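/- Let Λ = lim(Λ_n, p_n) be the (k+1)-graph associated to a covering sequence of k-graphs, let A be an abelian group, and let c ∈ Z²(Λ_1, A). Then there exists a unique 2-cocycle c' ∈ Z²(Λ, A) such that c'|_{Λ_1} = c and c'(λ,μ) = 0 whenever λ ∈ Λ^{ℕe_{k+1}} or μ ∈ Λ^{ℕe_{k+1}}. -/

import Mathlib

/-!
Every vertex `v` of `Λ` has a unique path `ξ_v ∈ Λ^{ℕ e_{k+1}}` from `v` down to a vertex of
`Λ₁`, because an edge of degree `e_{k+1}` is determined by its source. Splitting `ξ_{r λ} λ`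
into a horizontal and a vertical factor gives `ξ_{r λ} λ = π(λ) ξ_{s λ}` with `π(λ) ∈ Λ₁`, and
uniqueness of factorisations makes `π : Λ → Λ₁` a functor that fixes `Λ₁` and sends
`Λ^{ℕ e_{k+1}}` to vertices, so `π^* c` is an extension of the required kind. Conversely, the
cocycle identity shows that a cocycle vanishing on `Λ^{ℕ e_{k+1}}` does not see vertical paths
composed onto its arguments, whence
`c'(λ, μ) = c'(ξ_{r λ} λ, μ) = c'(π λ, ξ_{s λ} μ) = c'(π λ, π μ ξ_{s μ}) = c(π λ, π μ)`.
-/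

open scoped BigOperators NNReal ENNReal

/-- A `k`-graph: a countable small category presented on its set of morphisms,
with a range map, a source map, a (total, junk-valued on non-composable pairs)
composition, and a degree functor into `ℕ^k` satisfying the factorisation
property. -/
structure KGraph (k : ℕ) where
  M : Type
  countableM : Countable M
  nonemptyM : Nonempty M
  src : M → M
  rng : M → M
  comp : M → M → M
  deg : M → Fin k → ℕ
  src_src : ∀ x, src (src x) = src x
  rng_src : ∀ x, rng (src x) = src x
  src_rng : ∀ x, src (rng x) = rng x
  rng_rng : ∀ x, rng (rng x) = rng x
  comp_id : ∀ x, comp x (src x) = x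
  id_comp : ∀ x, comp (rng x) x = x
  src_comp : ∀ x y, src x = rng y → src (comp x y) = src y
  rng_comp : ∀ x y, src x = rng y → rng (comp x y) = rng x
  comp_assoc : ∀ x y z, src x = rng y → src y = rng z →
    comp (comp x y) z = comp x (comp y z)
  deg_src : ∀ x, deg (src x) = 0
  deg_rng : ∀ x, deg (rng x) = 0
  deg_comp : ∀ x y, src x = rng y → deg (comp x y) = deg x + deg y
  factor : ∀ (x : M) (m n : Fin k → ℕ), deg x = m + n →
    ∃! p : M × M, src p.1 = rng p.2 ∧ comp p.1 p.2 = x ∧ deg p.1 = m ∧ deg p.2 = n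

namespace KGraph

variable {k : ℕ} (Λ : KGraph k)

/-- The vertices (identity morphisms) of a `k`-graph. -/
def IsVertex (v : Λ.M) : Prop := Λ.rng v = v

/-- `Composable x y` means the composition `x ∘ y` (i.e. the path `xy`) is defined. -/
def Composable (x y : Λ.M) : Prop := Λ.src x = Λ.rng y

/-- The type of vertices of `Λ`. -/
def Vtx := {v : Λ.M // Λ.IsVertex v}

theorem isVertex_src (x : Λ.M) : Λ.IsVertex (Λ.src x) := Λ.rng_src x

theorem isVertex_rng (x : Λ.M) : Λ.IsVertex (Λ.rng x) := Λ.rng_rng x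

/-- The source of a morphism, as a vertex. -/
def srcV (x : Λ.M) : Λ.Vtx := ⟨Λ.src x, Λ.isVertex_src x⟩

/-- The set `vΛ^{≤ n}`. -/
def leSet (v : Λ.M) (n : Fin k → ℕ) : Set Λ.M :=
  {x | Λ.rng x = v ∧ Λ.deg x ≤ n ∧
    ∀ i : Fin k, Λ.deg x + Pi.single i 1 ≤ n →
      ¬∃ y, Λ.rng y = Λ.src x ∧ Λ.deg y = Pi.single i 1}

/-- A `k`-graph is row-finite if `vΛ^n` is finite for every vertex `v` and `n ∈ ℕ^k`. -/
def RowFinite : Prop :=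
  ∀ (v : Λ.M) (n : Fin k → ℕ), Λ.IsVertex v → {x | Λ.rng x = v ∧ Λ.deg x = n}.Finite

/-- A `k`-graph is locally convex if whenever `i < j`, `e ∈ Λ^{e_i}`, `f ∈ Λ^{e_j}` and
`r e = r f`, both `e` and `f` extend to paths of degree `e_i + e_j`. -/
def LocallyConvex : Prop :=
  ∀ (i j : Fin k), i < j → ∀ e f : Λ.M,
    Λ.deg e = Pi.single i 1 → Λ.deg f = Pi.single j 1 → Λ.rng e = Λ.rng f →
    (∃ e', Λ.Composable e e' ∧ Λ.deg e' = Pi.single j 1) ∧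
    (∃ f', Λ.Composable f f' ∧ Λ.deg f' = Pi.single i 1)

/-- `Λ^{min}(x,y)`: the pairs `(α, β)` with `xα = yβ` of degree `d x ⊔ d y`. -/
def MinExt (x y : Λ.M) : Set (Λ.M × Λ.M) :=
  {p | Λ.Composable x p.1 ∧ Λ.Composable y p.2 ∧
    Λ.comp x p.1 = Λ.comp y p.2 ∧ Λ.deg (Λ.comp x p.1) = Λ.deg x ⊔ Λ.deg y}

/-- A subset `E ⊆ vΛ` is exhaustive if every `x ∈ vΛ` has a minimal common extension
with some element of `E`. -/
def Exhaustive (v : Λ.M) (E : Set Λ.M) : Prop :=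
  ∀ x, Λ.rng x = v → ∃ μ ∈ E, (Λ.MinExt x μ).Nonempty

/-- A graph trace on `Λ`. -/
def IsGraphTrace (g : Λ.Vtx → ℝ≥0) : Prop :=
  ∀ (v : Λ.Vtx) (n : Fin k → ℕ), g v = ∑ᶠ x ∈ Λ.leSet v.1 n, g (Λ.srcV x)

/-- A `𝕋`-valued `2`-cocycle on `Λ`, presented as a `ℂ`-valued function that is
unimodular on composable pairs. -/
def IsTCocycle (c : Λ.M → Λ.M → ℂ) : Prop :=
  (∀ x y, Λ.Composable x y → ‖c x y‖ = 1) ∧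
  (∀ x y, Λ.IsVertex x ∨ Λ.IsVertex y → c x y = 1) ∧
  (∀ x y z, Λ.Composable x y → Λ.Composable y z →
    c x y * c (Λ.comp x y) z = c y z * c x (Λ.comp y z))

/-- A Cuntz–Krieger `(Λ, c)`-family in a `C*`-algebra `B`: relations (CK1)–(CK4). -/
def IsCKFamily {B : Type*} [NonUnitalCStarAlgebra B] [NormedSpace ℂ B]
    (c : Λ.M → Λ.M → ℂ) (s : Λ.M → B) : Prop :=
  (∀ v, Λ.IsVertex v → star (s v) = s v ∧ s v * s v = s v) ∧
  (∀ v w, Λ.IsVertex v → Λ.IsVertex w → v ≠ w → s v * s w = 0) ∧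
  (∀ x y, Λ.Composable x y → s x * s y = c x y • s (Λ.comp x y)) ∧
  (∀ x, star (s x) * s x = s (Λ.src x)) ∧
  (∀ (v : Λ.M) (n : Fin k → ℕ), Λ.IsVertex v →
    s v = ∑ᶠ x ∈ Λ.leSet v n, s x * star (s x))

end KGraph
attribute [local instance] Classical.propDecidable

namespace KGraph

variable {k : ℕ}

/-- An `A`-valued (categorical) `2`-cocycle on a `k`-graph, encoded as a total
function that vanishes on non-composable pairs and on pairs involving an
identity morphism, and satisfies the cocycle identity on composable triples. -/
def IsCocycle2 (Λ : KGraph k) {A : Type*} [AddCommGroup A] (c : Λ.M → Λ.M → A) : Prop :=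
  (∀ x y, ¬Λ.Composable x y → c x y = 0) ∧
  (∀ x y, Λ.IsVertex x ∨ Λ.IsVertex y → c x y = 0) ∧
  (∀ x y z, Λ.Composable x y → Λ.Composable y z →
    c x y + c (Λ.comp x y) z = c y z + c x (Λ.comp y z))

/-- The group `Z²(Λ, A)` of `A`-valued `2`-cocycles on `Λ`. -/
def Z2 (Λ : KGraph k) (A : Type*) [AddCommGroup A] : AddSubgroup (Λ.M → Λ.M → A) where
  carrier := {c | Λ.IsCocycle2 c}
  zero_mem' := by
    refine ⟨fun _ _ _ => rfl, fun _ _ _ => rfl, fun _ _ _ _ _ => rfl⟩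
  add_mem' := by
    rintro c d ⟨hc1, hc2, hc3⟩ ⟨hd1, hd2, hd3⟩
    refine ⟨fun x y h => ?_, fun x y h => ?_, fun x y z h1 h2 => ?_⟩
    · simp [hc1 x y h, hd1 x y h]
    · simp [hc2 x y h, hd2 x y h]
    · simp only [Pi.add_apply]
      rw [add_add_add_comm, hc3 x y z h1 h2, hd3 x y z h1 h2, add_add_add_comm]
  neg_mem' := by
    rintro c ⟨hc1, hc2, hc3⟩
    refine ⟨fun x y h => ?_, fun x y h => ?_, fun x y z h1 h2 => ?_⟩
    · simp [hc1 x y h]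
    · simp [hc2 x y h]
    · simp only [Pi.neg_apply]
      rw [← neg_add, ← neg_add, hc3 x y z h1 h2]

/-- A `1`-cochain: a function on morphisms vanishing on the identity morphisms. -/
def IsCochain1 (Λ : KGraph k) {A : Type*} [AddCommGroup A] (b : Λ.M → A) : Prop :=
  ∀ v, Λ.IsVertex v → b v = 0

/-- The coboundary `δ¹ b` of a `1`-cochain `b`. -/
noncomputable def delta1 (Λ : KGraph k) {A : Type*} [AddCommGroup A] (b : Λ.M → A) :
    Λ.M → Λ.M → A :=
  fun x y => if Λ.Composable x y then b x + b y - b (Λ.comp x y) else 0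

/-- The group `B²(Λ, A)` of `A`-valued `2`-coboundaries on `Λ`. -/
noncomputable def B2 (Λ : KGraph k) (A : Type*) [AddCommGroup A] :
    AddSubgroup (Λ.M → Λ.M → A) where
  carrier := {c | ∃ b, Λ.IsCochain1 b ∧ c = Λ.delta1 b}
  zero_mem' := ⟨0, fun _ _ => rfl, by
    funext x y
    simp [delta1]⟩
  add_mem' := by
    rintro c d ⟨b, hb, rfl⟩ ⟨b', hb', rfl⟩
    refine ⟨b + b', fun v hv => by simp [hb v hv, hb' v hv], ?_⟩
    funext x y
    simp only [Pi.add_apply, delta1]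
    split <;> [abel; simp]
  neg_mem' := by
    rintro c ⟨b, hb, rfl⟩
    refine ⟨-b, fun v hv => by simp [hb v hv], ?_⟩
    funext x y
    simp only [Pi.neg_apply, delta1]
    split <;> [abel; simp]

/-- The second (categorical) cohomology group `H²(Λ, A) = Z²(Λ,A)/B²(Λ,A)`. -/
noncomputable def H2 (Λ : KGraph k) (A : Type*) [AddCommGroup A] :=
  Z2 Λ A ⧸ (B2 Λ A).addSubgroupOf (Z2 Λ A)

noncomputable instance (Λ : KGraph k) (A : Type*) [AddCommGroup A] :
    AddCommGroup (H2 Λ A) := by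
  unfold H2; infer_instance

/-- A covering of `k`-graphs: a surjective degree-preserving functor that restricts to
bijections `Γv → Λ p(v)` and `vΓ → p(v)Λ` on every vertex `v`. -/
def IsKGraphCovering (Γ Λ : KGraph k) (p : Γ.M → Λ.M) : Prop :=
  Function.Surjective p ∧
  (∀ x, Λ.src (p x) = p (Γ.src x)) ∧
  (∀ x, Λ.rng (p x) = p (Γ.rng x)) ∧
  (∀ x, Λ.deg (p x) = Γ.deg x) ∧
  (∀ x y, Γ.Composable x y → p (Γ.comp x y) = Λ.comp (p x) (p y)) ∧
  (∀ v, Γ.IsVertex v → Set.BijOn p {x | Γ.src x = v} {y | Λ.src y = p v}) ∧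
  (∀ v, Γ.IsVertex v → Set.BijOn p {x | Γ.rng x = v} {y | Λ.rng y = p v})

end KGraph

open KGraph

/-- The `(k+1)`-graph `Λ = lim (Λ_n, p_n)` associated to a covering sequence of
`k`-graphs, together with all its defining data: `L n` is the `k`-graph `Λ_{n+1}`
(so `L 0 = Λ₁`), `p n : Λ_{n+2} → Λ_{n+1}` are the coverings, `Lam` is the limit
`(k+1)`-graph, `ι n : Λ_{n+1} → Λ` are the injective functors, and `edge` is the
bijection of `⨆_{n ≥ 2} Λ_n^0` onto `Λ^{e_{k+1}}`, subject to the characterising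
properties (1)–(5). -/
structure CovSeqLimit (k : ℕ) where
  L : ℕ → KGraph k
  p : ∀ n, (L (n + 1)).M → (L n).M
  p_cov : ∀ n, IsKGraphCovering (L (n + 1)) (L n) (p n)
  Lam : KGraph (k + 1)
  ι : ∀ n, (L n).M → Lam.M
  ι_inj : ∀ n, Function.Injective (ι n)
  ι_src : ∀ n x, Lam.src (ι n x) = ι n ((L n).src x)
  ι_rng : ∀ n x, Lam.rng (ι n x) = ι n ((L n).rng x)
  ι_comp : ∀ n x y, (L n).Composable x y →
    Lam.comp (ι n x) (ι n y) = ι n ((L n).comp x y)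
  ι_deg : ∀ n x, Lam.deg (ι n x) = Fin.snoc ((L n).deg x) 0
  ι_disjoint : ∀ m n x y, ι m x = ι n y → m = n
  ι_union : ∀ z : Lam.M, Lam.deg z (Fin.last k) = 0 → ∃ n x, ι n x = z
  edge : (Σ n : ℕ, (L (n + 1)).M) → Lam.M
  edge_deg : ∀ q : Σ n, (L (n + 1)).M, (L (q.1 + 1)).IsVertex q.2 →
    Lam.deg (edge q) = Fin.snoc (fun _ : Fin k => 0) 1
  edge_injOn : Set.InjOn edge {q | (L (q.1 + 1)).IsVertex q.2}
  edge_surj : ∀ z : Lam.M, Lam.deg z = Fin.snoc (fun _ : Fin k => 0) 1 →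
    ∃ q, (L (q.1 + 1)).IsVertex q.2 ∧ edge q = z
  edge_src : ∀ (n) (v : (L (n + 1)).M), (L (n + 1)).IsVertex v →
    Lam.src (edge ⟨n, v⟩) = ι (n + 1) v
  edge_rng : ∀ (n) (v : (L (n + 1)).M), (L (n + 1)).IsVertex v →
    Lam.rng (edge ⟨n, v⟩) = ι n (p n v)
  edge_comm : ∀ (n) (x : (L (n + 1)).M),
    Lam.comp (edge ⟨n, (L (n + 1)).rng x⟩) (ι (n + 1) x) =
      Lam.comp (ι n (p n x)) (edge ⟨n, (L (n + 1)).src x⟩)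

namespace CovSeqLimit

variable {k : ℕ} (C : CovSeqLimit k)

/-- The iterated covering maps `p_{1,n} : Λ_n → Λ_1`. -/
def pIter : ∀ n, (C.L n).M → (C.L 0).M
  | 0 => id
  | n + 1 => pIter n ∘ C.p n

/-- A degree `d ∈ ℕ^{k+1}` lies in `ℕ e_{k+1}` iff its first `k` coordinates vanish. -/
def OnlyLast {k : ℕ} (d : Fin (k + 1) → ℕ) : Prop :=
  ∀ i : Fin k, d i.castSucc = 0

/-- The hypothesis that `ξ` assigns to each vertex `v` of `Λ` the path
`ξ_v ∈ Λ_1^0 Λ^{ℕ e_{k+1}} v`. -/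
def IsXi (ξ : C.Lam.M → C.Lam.M) : Prop :=
  ∀ v, C.Lam.IsVertex v → C.Lam.src (ξ v) = v ∧ OnlyLast (C.Lam.deg (ξ v)) ∧
    ∃ w, (C.L 0).IsVertex w ∧ C.Lam.rng (ξ v) = C.ι 0 w

/-- The hypothesis that `π : Λ → Λ₁` is the projection determined by the unique
factorisation `ξ_{r λ} λ = π(λ) β` with `π(λ) ∈ Λ₁` and `β ∈ Λ^{ℕ e_{k+1}}`. -/
def IsProjOnto (ξ : C.Lam.M → C.Lam.M) (π : C.Lam.M → (C.L 0).M) : Prop :=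
  ∀ x, ∃ β, OnlyLast (C.Lam.deg β) ∧ C.Lam.Composable (C.ι 0 (π x)) β ∧
    C.Lam.comp (ξ (C.Lam.rng x)) x = C.Lam.comp (C.ι 0 (π x)) β

/-- The map `π_* : Z²(Λ₁, A) → Z²(Λ, A)`, `π_* c (λ, μ) = c(π λ, π μ)`. -/
noncomputable def pfwd {A : Type*} [AddCommGroup A] (π : C.Lam.M → (C.L 0).M)
    (c : (C.L 0).M → (C.L 0).M → A) : C.Lam.M → C.Lam.M → A :=
  fun x y => if C.Lam.Composable x y then c (π x) (π y) else 0

/-- The restriction map `Z²(Λ, A) → Z²(Λ₁, A)`, `c ↦ c|_{Λ₁}`. -/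
def res {A : Type*} [AddCommGroup A] (c : C.Lam.M → C.Lam.M → A) :
    (C.L 0).M → (C.L 0).M → A :=
  fun x y => c (C.ι 0 x) (C.ι 0 y)

end CovSeqLimit

namespace KGraph

variable {k : ℕ}

instance (Λ : KGraph k) : Nonempty Λ.M := Λ.nonemptyM

variable {Λ : KGraph k}

theorem src_of_isVertex {v : Λ.M} (h : Λ.IsVertex v) : Λ.src v = v := by
  rw [← h, Λ.src_rng]

theorem deg_eq_zero_of_isVertex {v : Λ.M} (h : Λ.IsVertex v) : Λ.deg v = 0 := by
  rw [← h, Λ.deg_rng]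

theorem isVertex_of_deg_eq_zero {x : Λ.M} (h : Λ.deg x = 0) : Λ.IsVertex x := by
  obtain ⟨q, _, hq⟩ := Λ.factor x 0 0 (by simp [h])
  have h1 := hq (Λ.rng x, x) ⟨Λ.src_rng x, Λ.id_comp x, Λ.deg_rng x, h⟩
  have h2 := hq (x, Λ.src x) ⟨(Λ.rng_src x).symm, Λ.comp_id x, h, Λ.deg_src x⟩
  exact congrArg Prod.fst (h1.trans h2.symm)

theorem composable_comp_left {x y z : Λ.M} (hxy : Λ.Composable x y) (hyz : Λ.Composable y z) :
    Λ.Composable (Λ.comp x y) z :=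
  (Λ.src_comp x y hxy).trans hyz

theorem composable_comp_right {x y z : Λ.M} (hxy : Λ.Composable x y)
    (hyz : Λ.Composable y z) : Λ.Composable x (Λ.comp y z) :=
  hxy.trans (Λ.rng_comp y z hyz).symm

section Cocycle

variable {A : Type*} [AddCommGroup A] {c : Λ.M → Λ.M → A} {P : Λ.M → Prop}

theorem IsCocycle2.apply_comp_left (hc : Λ.IsCocycle2 c) (hP : ∀ x y, P x ∨ P y → c x y = 0)
    {α x y : Λ.M} (hα : P α) (hαx : Λ.Composable α x) (hxy : Λ.Composable x y) :
    c (Λ.comp α x) y = c x y := by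
  have h := hc.2.2 α x y hαx hxy
  rwa [hP _ _ (.inl hα), hP _ _ (.inl hα), zero_add, add_zero] at h

theorem IsCocycle2.apply_comp_right (hc : Λ.IsCocycle2 c) (hP : ∀ x y, P x ∨ P y → c x y = 0)
    {x y β : Λ.M} (hβ : P β) (hxy : Λ.Composable x y) (hyβ : Λ.Composable y β) :
    c x (Λ.comp y β) = c x y := by
  have h := hc.2.2 x y β hxy hyβ
  rw [hP _ _ (.inr hβ), hP _ _ (.inr hβ), zero_add, add_zero] at h
  exact h.symm

theorem IsCocycle2.apply_comp_middle (hc : Λ.IsCocycle2 c) (hP : ∀ x y, P x ∨ P y → c x y = 0)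
    {x β y : Λ.M} (hβ : P β) (hxβ : Λ.Composable x β) (hβy : Λ.Composable β y) :
    c (Λ.comp x β) y = c x (Λ.comp β y) := by
  have h := hc.2.2 x β y hxβ hβy
  rwa [hP _ _ (.inr hβ), hP _ _ (.inl hβ), zero_add, zero_add] at h

theorem IsCocycle2.pullback {l : ℕ} {Γ : KGraph l} {F : Γ.M → Λ.M}
    (hF : ∀ {x y}, Γ.Composable x y →
      Λ.Composable (F x) (F y) ∧ F (Γ.comp x y) = Λ.comp (F x) (F y))
    (hFv : ∀ {v}, Γ.IsVertex v → Λ.IsVertex (F v)) (hc : Λ.IsCocycle2 c) :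
    Γ.IsCocycle2 fun x y => if Γ.Composable x y then c (F x) (F y) else 0 := by
  refine ⟨fun x y h => if_neg h, fun x y h => ?_, fun x y z hxy hyz => ?_⟩
  · dsimp only
    split_ifs
    · exact hc.2.1 _ _ (h.imp hFv hFv)
    · rfl
  · simp only [if_pos hxy, if_pos hyz, if_pos (composable_comp_left hxy hyz),
      if_pos (composable_comp_right hxy hyz), (hF hxy).2, (hF hyz).2]
    exact hc.2.2 _ _ _ (hF hxy).1 (hF hyz).1

end Cocycle

end KGraph

namespace CovSeqLimit

variable {k : ℕ}

theorem onlyLast_zero : OnlyLast (0 : Fin (k + 1) → ℕ) := fun _ => rfl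

theorem onlyLast_snoc (j : ℕ) : OnlyLast (Fin.snoc (fun _ : Fin k => 0) j : Fin (k + 1) → ℕ) :=
  fun _ => Fin.snoc_castSucc (α := fun _ => ℕ) ..

theorem OnlyLast.add {d e : Fin (k + 1) → ℕ} (hd : OnlyLast d) (he : OnlyLast e) :
    OnlyLast (d + e) := fun i => by simp [hd i, he i]

theorem OnlyLast.eq_zero {d : Fin (k + 1) → ℕ} (h : OnlyLast d) (hl : d (Fin.last k) = 0) :
    d = 0 :=
  funext fun i => Fin.lastCases hl h i

end CovSeqLimit

open CovSeqLimit in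
theorem KGraph.existsUnique_horizontal_vertical_factor {k : ℕ} (Λ : KGraph (k + 1))
    (x : Λ.M) :
    ∃! p : Λ.M × Λ.M, Λ.Composable p.1 p.2 ∧ Λ.comp p.1 p.2 = x ∧
      Λ.deg p.1 (Fin.last k) = 0 ∧ OnlyLast (Λ.deg p.2) := by
  have hd : Λ.deg x = Fin.snoc (Fin.init (Λ.deg x)) 0 +
      Fin.snoc (fun _ : Fin k => 0) (Λ.deg x (Fin.last k)) := by
    funext i
    refine Fin.lastCases ?_ (fun i => ?_) i <;> simp [Fin.init]
  refine (existsUnique_congr fun p => and_congr_right fun hp => and_congr_right fun he => ?_).mp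
    (Λ.factor x _ _ hd)
  have hsum : Λ.deg x = Λ.deg p.1 + Λ.deg p.2 := by rw [← he, Λ.deg_comp _ _ hp]
  constructor
  · rintro ⟨h1, h2⟩
    exact ⟨by simp [h1], by rw [h2]; exact onlyLast_snoc _⟩
  · rintro ⟨h1, h2⟩
    have h2' : ∀ i : Fin k, Λ.deg p.2 i.castSucc = 0 := h2
    constructor <;> funext i <;> refine Fin.lastCases ?_ (fun i => ?_) i <;>
      simp [hsum, h1, h2', Fin.init]

namespace CovSeqLimit

variable {k : ℕ} (C : CovSeqLimit k)

theorem deg_ι_last (n : ℕ) (a : (C.L n).M) : C.Lam.deg (C.ι n a) (Fin.last k) = 0 := by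
  rw [C.ι_deg, Fin.snoc_last]

theorem composable_ι_iff {n : ℕ} {a b : (C.L n).M} :
    C.Lam.Composable (C.ι n a) (C.ι n b) ↔ (C.L n).Composable a b := by
  rw [Composable, Composable, C.ι_src, C.ι_rng, (C.ι_inj n).eq_iff]

theorem isVertex_of_isVertex_ι {n : ℕ} {a : (C.L n).M} (h : C.Lam.IsVertex (C.ι n a)) :
    (C.L n).IsVertex a :=
  C.ι_inj n ((C.ι_rng n a).symm.trans h)

theorem mem_range_ι_zero {x : C.Lam.M} (hx : C.Lam.deg x (Fin.last k) = 0)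
    (hr : C.Lam.rng x ∈ Set.range (C.ι 0)) : x ∈ Set.range (C.ι 0) := by
  obtain ⟨n, a, rfl⟩ := C.ι_union x hx
  obtain ⟨w, hw⟩ := hr
  rw [C.ι_rng] at hw
  obtain rfl := C.ι_disjoint _ _ _ _ hw
  exact ⟨a, rfl⟩

def IsDescent (v γ : C.Lam.M) : Prop :=
  OnlyLast (C.Lam.deg γ) ∧ C.Lam.src γ = v ∧ C.Lam.rng γ ∈ Set.range (C.ι 0)

variable {C}

theorem isDescent_self {v : C.Lam.M} (hv : C.Lam.IsVertex v) (h : v ∈ Set.range (C.ι 0)) :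
    C.IsDescent v v :=
  ⟨by rw [deg_eq_zero_of_isVertex hv]; exact onlyLast_zero, src_of_isVertex hv, by rwa [hv]⟩

theorem IsDescent.eq_or_exists_edge {v γ : C.Lam.M} (h : C.IsDescent v γ) :
    (γ = v ∧ v ∈ Set.range (C.ι 0)) ∨
      ∃ n a γ', v = C.ι (n + 1) a ∧ C.IsDescent (C.ι n (C.p n a)) γ' ∧
        γ = C.Lam.comp γ' (C.edge ⟨n, a⟩) := by
  obtain ⟨hγ, rfl, hr⟩ := h
  cases hj : C.Lam.deg γ (Fin.last k) with
  | zero =>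
    have hv : C.Lam.IsVertex γ := isVertex_of_deg_eq_zero (hγ.eq_zero hj)
    rw [src_of_isVertex hv]
    exact .inl ⟨rfl, by rwa [hv] at hr⟩
  | succ j =>
    have hd : C.Lam.deg γ = Fin.snoc (fun _ : Fin k => 0) j + Fin.snoc (fun _ : Fin k => 0) 1 := by
      have hγi : ∀ i : Fin k, C.Lam.deg γ i.castSucc = 0 := hγ
      funext i
      refine Fin.lastCases ?_ (fun i => ?_) i <;> simp [hj, hγi]
    obtain ⟨⟨γ', e⟩, ⟨hcomp, rfl, hγ', he⟩, -⟩ := C.Lam.factor γ _ _ hd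
    obtain ⟨⟨n, a⟩, ha, rfl⟩ := C.edge_surj e he
    refine .inr ⟨n, a, γ', ?_, ⟨?_, ?_, ?_⟩, rfl⟩
    · rw [C.Lam.src_comp _ _ hcomp, C.edge_src n a ha]
    · rw [hγ']
      exact onlyLast_snoc j
    · rw [hcomp, C.edge_rng n a ha]
    · rwa [C.Lam.rng_comp _ _ hcomp] at hr

theorem IsDescent.eq_of_mem_range {v γ : C.Lam.M} (h : C.IsDescent v γ)
    (hv : v ∈ Set.range (C.ι 0)) : γ = v := by
  rcases h.eq_or_exists_edge with h | ⟨n, a, -, rfl, -⟩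
  · exact h.1
  · obtain ⟨w, hw⟩ := hv
    exact absurd (C.ι_disjoint _ _ _ _ hw) (by omega)

theorem IsDescent.exists_edge {n : ℕ} {a : (C.L (n + 1)).M} {γ : C.Lam.M}
    (h : C.IsDescent (C.ι (n + 1) a) γ) :
    ∃ γ', C.IsDescent (C.ι n (C.p n a)) γ' ∧ γ = C.Lam.comp γ' (C.edge ⟨n, a⟩) := by
  rcases h.eq_or_exists_edge with ⟨-, w, hw⟩ | ⟨m, b, γ', hab, hγ', rfl⟩
  · exact absurd (C.ι_disjoint _ _ _ _ hw) (by omega)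
  · obtain rfl : m = n := by
      have := C.ι_disjoint _ _ _ _ hab
      omega
    obtain rfl := C.ι_inj _ hab
    exact ⟨γ', hγ', rfl⟩

theorem IsDescent.unique {v γ δ : C.Lam.M} (hγ : C.IsDescent v γ) (hδ : C.IsDescent v δ) :
    γ = δ := by
  obtain ⟨n, a, rfl⟩ := C.ι_union v (by rw [← hγ.2.1, C.Lam.deg_src]; rfl)
  induction n generalizing γ δ with
  | zero => rw [hγ.eq_of_mem_range ⟨a, rfl⟩, hδ.eq_of_mem_range ⟨a, rfl⟩]
  | succ n ih =>
    obtain ⟨γ', hγ', rfl⟩ := hγ.exists_edge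
    obtain ⟨δ', hδ', rfl⟩ := hδ.exists_edge
    rw [ih _ hγ' hδ']

theorem exists_isDescent {v : C.Lam.M} (hv : C.Lam.IsVertex v) : ∃ γ, C.IsDescent v γ := by
  obtain ⟨n, a, rfl⟩ := C.ι_union v (by rw [deg_eq_zero_of_isVertex hv]; rfl)
  induction n with
  | zero => exact ⟨_, isDescent_self hv ⟨a, rfl⟩⟩
  | succ n ih =>
    have ha := C.isVertex_of_isVertex_ι hv
    have hr : C.Lam.rng (C.edge ⟨n, a⟩) = C.ι n (C.p n a) := C.edge_rng n a ha
    obtain ⟨γ', hγ', hs, hr'⟩ := ih _ (hr ▸ C.Lam.isVertex_rng _)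
    have hcomp : C.Lam.Composable γ' (C.edge ⟨n, a⟩) := hs.trans hr.symm
    refine ⟨C.Lam.comp γ' (C.edge ⟨n, a⟩), ?_, ?_, ?_⟩
    · rw [C.Lam.deg_comp _ _ hcomp, C.edge_deg ⟨n, a⟩ ha]
      exact hγ'.add (onlyLast_snoc 1)
    · rw [C.Lam.src_comp _ _ hcomp, C.edge_src n a ha]
    · rwa [C.Lam.rng_comp _ _ hcomp]

variable (C)

noncomputable def descent (v : C.Lam.M) : C.Lam.M :=
  Classical.epsilon (C.IsDescent v)

variable {C}

theorem isDescent_descent {v : C.Lam.M} (hv : C.Lam.IsVertex v) : C.IsDescent v (C.descent v) :=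
  Classical.epsilon_spec (exists_isDescent hv)

theorem descent_eq {v γ : C.Lam.M} (h : C.IsDescent v γ) : C.descent v = γ :=
  (isDescent_descent (h.2.1 ▸ C.Lam.isVertex_src γ)).unique h

variable (C)

noncomputable def proj (x : C.Lam.M) : (C.L 0).M :=
  Classical.epsilon fun a => C.Lam.Composable (C.ι 0 a) (C.descent (C.Lam.src x)) ∧
    C.Lam.comp (C.descent (C.Lam.rng x)) x = C.Lam.comp (C.ι 0 a) (C.descent (C.Lam.src x))

theorem proj_spec (x : C.Lam.M) :
    C.Lam.Composable (C.ι 0 (C.proj x)) (C.descent (C.Lam.src x)) ∧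
      C.Lam.comp (C.descent (C.Lam.rng x)) x =
        C.Lam.comp (C.ι 0 (C.proj x)) (C.descent (C.Lam.src x)) := by
  refine Classical.epsilon_spec (p := fun a => C.Lam.Composable (C.ι 0 a) _ ∧ _ = _) ?_
  have hξ := isDescent_descent (C.Lam.isVertex_rng x)
  have hξx : C.Lam.Composable (C.descent (C.Lam.rng x)) x := hξ.2.1
  obtain ⟨⟨h, β⟩, ⟨hhβ, he, hh, hβ⟩, -⟩ :=
    C.Lam.existsUnique_horizontal_vertical_factor (C.Lam.comp (C.descent (C.Lam.rng x)) x)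
  have hr : C.Lam.rng h = C.Lam.rng (C.descent (C.Lam.rng x)) := by
    have := congrArg C.Lam.rng he
    rwa [C.Lam.rng_comp _ _ hhβ, C.Lam.rng_comp _ _ hξx] at this
  obtain ⟨a, rfl⟩ := C.mem_range_ι_zero hh (hr ▸ hξ.2.2)
  have hs : C.Lam.src β = C.Lam.src x := by
    have := congrArg C.Lam.src he
    rwa [C.Lam.src_comp _ _ hhβ, C.Lam.src_comp _ _ hξx] at this
  rw [descent_eq ⟨hβ, hs, _, (C.ι_src 0 a).symm.trans hhβ⟩]
  exact ⟨a, hhβ, he.symm⟩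

theorem proj_eq_of {x : C.Lam.M} {a : (C.L 0).M}
    (ha : C.Lam.Composable (C.ι 0 a) (C.descent (C.Lam.src x)))
    (he : C.Lam.comp (C.descent (C.Lam.rng x)) x =
      C.Lam.comp (C.ι 0 a) (C.descent (C.Lam.src x))) :
    C.proj x = a := by
  have hξ := isDescent_descent (C.Lam.isVertex_src x)
  have := (C.Lam.existsUnique_horizontal_vertical_factor _).unique
    (y₁ := (C.ι 0 (C.proj x), C.descent (C.Lam.src x))) (y₂ := (C.ι 0 a, _))
    ⟨(C.proj_spec x).1, (C.proj_spec x).2.symm, C.deg_ι_last 0 _, hξ.1⟩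
    ⟨ha, he.symm, C.deg_ι_last 0 a, hξ.1⟩
  exact C.ι_inj 0 (congrArg Prod.fst this)

theorem proj_ι_zero (a : (C.L 0).M) : C.proj (C.ι 0 a) = a := by
  have hr := descent_eq (isDescent_self (C.Lam.isVertex_rng (C.ι 0 a)) ⟨_, (C.ι_rng 0 a).symm⟩)
  have hs := descent_eq (isDescent_self (C.Lam.isVertex_src (C.ι 0 a)) ⟨_, (C.ι_src 0 a).symm⟩)
  refine C.proj_eq_of ?_ ?_
  · rw [hs]
    exact (C.Lam.rng_src _).symm
  · rw [hr, hs, C.Lam.id_comp, C.Lam.comp_id]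

theorem isVertex_proj_of_onlyLast {x : C.Lam.M} (hx : OnlyLast (C.Lam.deg x)) :
    (C.L 0).IsVertex (C.proj x) := by
  have hξ := isDescent_descent (C.Lam.isVertex_rng x)
  have hξx : C.Lam.Composable (C.descent (C.Lam.rng x)) x := hξ.2.1
  have hd : C.IsDescent (C.Lam.src x) (C.Lam.comp (C.descent (C.Lam.rng x)) x) :=
    ⟨by rw [C.Lam.deg_comp _ _ hξx]; exact hξ.1.add hx, C.Lam.src_comp _ _ hξx,
      by rw [C.Lam.rng_comp _ _ hξx]; exact hξ.2.2⟩
  obtain ⟨w, hw⟩ := (isDescent_descent (C.Lam.isVertex_src x)).2.2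
  have hwv : C.Lam.IsVertex (C.ι 0 w) := hw ▸ C.Lam.isVertex_rng _
  rw [C.proj_eq_of (a := w) ((src_of_isVertex hwv).trans hw)
    (by rw [hw, C.Lam.id_comp, descent_eq hd])]
  exact C.isVertex_of_isVertex_ι hwv

theorem proj_comp {x y : C.Lam.M} (hxy : C.Lam.Composable x y) :
    (C.L 0).Composable (C.proj x) (C.proj y) ∧
      C.proj (C.Lam.comp x y) = (C.L 0).comp (C.proj x) (C.proj y) := by
  obtain ⟨hx₁, hx₂⟩ := C.proj_spec x
  obtain ⟨hy₁, hy₂⟩ := C.proj_spec y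
  have hξx : C.Lam.Composable (C.descent (C.Lam.rng x)) x :=
    (isDescent_descent (C.Lam.isVertex_rng x)).2.1
  have hξy : C.Lam.Composable (C.descent (C.Lam.src x)) y :=
    (isDescent_descent (C.Lam.isVertex_src x)).2.1.trans hxy
  have hab : C.Lam.Composable (C.ι 0 (C.proj x)) (C.ι 0 (C.proj y)) := by
    have := congrArg C.Lam.rng hy₂
    rw [C.Lam.rng_comp _ _ ((isDescent_descent (C.Lam.isVertex_rng y)).2.1),
      C.Lam.rng_comp _ _ hy₁, ← show C.Lam.src x = C.Lam.rng y from hxy] at this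
    exact hx₁.trans this
  have hab' := C.composable_ι_iff.mp hab
  refine ⟨hab', C.proj_eq_of ?_ ?_⟩
  · rw [C.Lam.src_comp _ _ hxy, Composable, C.ι_src, (C.L 0).src_comp _ _ hab', ← C.ι_src]
    exact hy₁
  · rw [C.Lam.rng_comp _ _ hxy, C.Lam.src_comp _ _ hxy, ← C.ι_comp 0 _ _ hab',
      C.Lam.comp_assoc _ _ _ hab hy₁, ← hy₂, ← show C.Lam.src x = C.Lam.rng y from hxy,
      ← C.Lam.comp_assoc _ _ _ hx₁ hξy, ← hx₂, C.Lam.comp_assoc _ _ _ hξx hxy]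

section Cocycle

variable {A : Type*} [AddCommGroup A] {c : (C.L 0).M → (C.L 0).M → A}

theorem pfwd_proj_mem_Z2 (hc : c ∈ Z2 (C.L 0) A) : C.pfwd C.proj c ∈ Z2 C.Lam A :=
  IsCocycle2.pullback C.proj_comp
    (fun hv => C.isVertex_proj_of_onlyLast (by rw [deg_eq_zero_of_isVertex hv]; exact onlyLast_zero))
    hc

theorem pfwd_proj_ι_zero (hc : c ∈ Z2 (C.L 0) A) (a b : (C.L 0).M) :
    C.pfwd C.proj c (C.ι 0 a) (C.ι 0 b) = c a b := by
  rw [pfwd, C.proj_ι_zero, C.proj_ι_zero]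
  split_ifs with h
  · rfl
  · exact (hc.1 a b (mt C.composable_ι_iff.mpr h)).symm

theorem pfwd_proj_eq_zero_of_onlyLast (hc : c ∈ Z2 (C.L 0) A) {x y : C.Lam.M}
    (h : OnlyLast (C.Lam.deg x) ∨ OnlyLast (C.Lam.deg y)) : C.pfwd C.proj c x y = 0 := by
  rw [pfwd]
  split_ifs
  · exact hc.2.1 _ _ (h.imp C.isVertex_proj_of_onlyLast C.isVertex_proj_of_onlyLast)
  · rfl

theorem eq_pfwd_proj {c' : C.Lam.M → C.Lam.M → A} (hc' : C.Lam.IsCocycle2 c')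
    (hres : ∀ a b, c' (C.ι 0 a) (C.ι 0 b) = c a b)
    (hvan : ∀ x y, OnlyLast (C.Lam.deg x) ∨ OnlyLast (C.Lam.deg y) → c' x y = 0) :
    c' = C.pfwd C.proj c := by
  funext x y
  rw [pfwd]
  split_ifs with hxy
  · obtain ⟨hx₁, hx₂⟩ := C.proj_spec x
    obtain ⟨hy₁, hy₂⟩ := C.proj_spec y
    have hξx := isDescent_descent (C.Lam.isVertex_rng x)
    have hξsx := isDescent_descent (C.Lam.isVertex_src x)
    calc c' x y = c' (C.Lam.comp (C.descent (C.Lam.rng x)) x) y :=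
          (hc'.apply_comp_left hvan hξx.1 hξx.2.1 hxy).symm
      _ = c' (C.ι 0 (C.proj x)) (C.Lam.comp (C.descent (C.Lam.src x)) y) := by
          rw [hx₂, hc'.apply_comp_middle hvan hξsx.1 hx₁ (hξsx.2.1.trans hxy)]
      _ = c' (C.ι 0 (C.proj x)) (C.ι 0 (C.proj y)) := by
          rw [show C.Lam.src x = C.Lam.rng y from hxy, hy₂,
            hc'.apply_comp_right hvan (isDescent_descent (C.Lam.isVertex_src y)).1
              (C.composable_ι_iff.mpr (C.proj_comp hxy).1) hy₁]
      _ = c (C.proj x) (C.proj y) := hres _ _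
  · exact hc'.1 x y hxy

end Cocycle

end CovSeqLimit

open KGraph in
/-- For `Λ = lim (Λ_n, p_n)` and `c ∈ Z²(Λ₁, A)`, there is a unique
`2`-cocycle `c'` on `Λ` extending `c` that vanishes whenever either argument lies in
`Λ^{ℕ e_{k+1}}`. -/
theorem existsUnique_extension_cocycle {k : ℕ} (C : CovSeqLimit k)
    (A : Type*) [AddCommGroup A]
    (c : (C.L 0).M → (C.L 0).M → A) (hc : c ∈ Z2 (C.L 0) A) :
    ∃! c' : C.Lam.M → C.Lam.M → A,
      c' ∈ Z2 C.Lam A ∧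
      (∀ x y : (C.L 0).M, c' (C.ι 0 x) (C.ι 0 y) = c x y) ∧
      (∀ x y : C.Lam.M,
        CovSeqLimit.OnlyLast (C.Lam.deg x) ∨ CovSeqLimit.OnlyLast (C.Lam.deg y) →
          c' x y = 0) := by
  refine ⟨C.pfwd C.proj c, ⟨C.pfwd_proj_mem_Z2 hc, C.pfwd_proj_ι_zero hc,
    fun _ _ => C.pfwd_proj_eq_zero_of_onlyLast hc⟩, ?_⟩
  rintro c' ⟨hc', hres, hvan⟩
  exact C.eq_pfwd_proj hc' hres hvan
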